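/- arXiv:2510.07682 — 2 statements merged into one kernel-verified Lean document; each statement's English description precedes it below -/
import Mathlib

section
/- Let ρ ∈ (0,∞). Then f_ρ(1,r) = g_ρ(1,−r) for every r ∈ ℝ; moreover, for every ε > 0 there exists r₀ > 0 such that f_ρ(1,r) ≤ exp(−2|r|(1−ε)) and g_ρ(1,r) ≤ exp(−2|r|(1−ε)) whenever |r| ≥ r₀. -/
open Real MeasureTheory Filter Set

noncomputable section

/-- `S` is the (unique) solution of the ODE
`S'(u) = -8ρ S(u)^{1+ρ}/(1+S(u)^ρ)²` with `S(0) = x`, valued in `(0,∞)`. -/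
def IsSsol (ρ x : ℝ) (S : ℝ → ℝ) : Prop :=
  (∀ u : ℝ, 0 < S u) ∧ S 0 = x ∧
    ∀ u : ℝ, HasDerivAt S (-(8 * ρ * S u ^ (1 + ρ)) / (1 + S u ^ ρ) ^ 2) u

/-- `f_ρ(x,·)`, expressed in terms of the solution `S = S_ρ(x,·)`. -/
def fRho (ρ : ℝ) (S : ℝ → ℝ) (r : ℝ) : ℝ :=
  Real.exp (2 * ∫ u in (0:ℝ)..r, (1 - 2 * (1 + (1 - ρ) * S u ^ ρ) / (1 + S u ^ ρ) ^ 2))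

/-- `g_ρ(x,·)`, expressed in terms of the solution `S = S_ρ(x,·)`. -/
def gRho (ρ x : ℝ) (S : ℝ → ℝ) (r : ℝ) : ℝ :=
  x * Real.exp (-2 * ∫ u in (0:ℝ)..r,
      (1 - 2 * ((1 - ρ) * S u ^ ρ + S u ^ (2 * ρ)) / (1 + S u ^ ρ) ^ 2))

/-!
Substituting `p = S^ρ` turns the ODE into `p' = -8ρ²p²/(1+p)²`, which separates:
`flowTime ρ (p u) = u` for an explicit `flowTime` that is strictly decreasing on `(0,∞)` and odd
under `q ↦ q⁻¹`, so `p (-u) = (p u)⁻¹`. Since the integrand of `g` at `q` is the integrand of `f`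
at `q⁻¹`, the `g`-integral up to `-r` is minus the `f`-integral up to `r`, which is the identity.
The `f`-integral has the explicit primitive `fPrimitive ρ (p r)`; eliminating `r = flowTime ρ (p r)`
leaves `-2|r|` plus a constant plus a multiple of `|log p(r)| ≤ log (1 + 8ρ²|r|) = o(|r|)`.
-/

open Asymptotics

/-- The ODE satisfied by `p = S^ρ`. -/
def IsReducedSol (ρ y : ℝ) (p : ℝ → ℝ) : Prop :=
  (∀ u, 0 < p u) ∧ p 0 = y ∧ ∀ u, HasDerivAt p (-(8 * ρ ^ 2 * p u ^ 2) / (1 + p u) ^ 2) u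

def fIntegrand (ρ q : ℝ) : ℝ := 1 - 2 * (1 + (1 - ρ) * q) / (1 + q) ^ 2

def gIntegrand (ρ q : ℝ) : ℝ := 1 - 2 * ((1 - ρ) * q + q ^ 2) / (1 + q) ^ 2

/-- A primitive of `-(1 + q)² / (8 ρ² q²)`, the reciprocal of the right-hand side of the
reduced ODE. -/
def flowTime (ρ q : ℝ) : ℝ := (q⁻¹ - q) / (8 * ρ ^ 2) - log q / (4 * ρ ^ 2)

def fPrimitive (ρ q : ℝ) : ℝ := (2 - q - q⁻¹) / (8 * ρ ^ 2) - log q / (4 * ρ)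

lemma IsSsol.isReducedSol_rpow {ρ x : ℝ} {S : ℝ → ℝ} (hS : IsSsol ρ x S) :
    IsReducedSol ρ (x ^ ρ) (fun u => S u ^ ρ) := by
  obtain ⟨hpos, hS0, hS'⟩ := hS
  refine ⟨fun u => rpow_pos_of_pos (hpos u) ρ, by simp only [hS0], fun u => ?_⟩
  convert (hS' u).rpow_const (p := ρ) (Or.inl (hpos u).ne') using 1
  have hs := hpos u
  simp only [rpow_add hs, rpow_sub hs, rpow_one]
  have : 0 < S u ^ ρ := rpow_pos_of_pos hs ρ
  field_simp

lemma gIntegrand_eq_fIntegrand_inv (ρ : ℝ) {q : ℝ} (hq : 0 < q) :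
    gIntegrand ρ q = fIntegrand ρ q⁻¹ := by
  unfold gIntegrand fIntegrand
  field_simp
  ring

lemma flowTime_one (ρ : ℝ) : flowTime ρ 1 = 0 := by simp [flowTime]

lemma fPrimitive_one (ρ : ℝ) : fPrimitive ρ 1 = 0 := by norm_num [fPrimitive]

lemma flowTime_inv (ρ q : ℝ) : flowTime ρ q⁻¹ = -flowTime ρ q := by
  unfold flowTime; rw [inv_inv, log_inv]; ring

lemma strictAntiOn_flowTime {ρ : ℝ} (hρ : ρ ≠ 0) : StrictAntiOn (flowTime ρ) (Ioi 0) := by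
  intro a ha b _ hab
  have hρ2 : 0 < ρ ^ 2 := by positivity
  have h1 : b⁻¹ - b < a⁻¹ - a := sub_lt_sub (inv_strictAnti₀ ha hab) hab
  have h2 : log a < log b := log_lt_log ha hab
  unfold flowTime
  gcongr

lemma flowTime_nonneg {ρ q : ℝ} (hρ : ρ ≠ 0) (hq0 : 0 < q) (hq1 : q ≤ 1) : 0 ≤ flowTime ρ q :=
  flowTime_one ρ ▸ (strictAntiOn_flowTime hρ).antitoneOn hq0 (mem_Ioi.2 one_pos) hq1

lemma flowTime_nonpos {ρ q : ℝ} (hρ : ρ ≠ 0) (hq1 : 1 ≤ q) : flowTime ρ q ≤ 0 :=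
  flowTime_one ρ ▸ (strictAntiOn_flowTime hρ).antitoneOn (mem_Ioi.2 one_pos)
    (mem_Ioi.2 (one_pos.trans_le hq1)) hq1

lemma two_mul_fPrimitive_add_two_mul_abs_flowTime_le {ρ q : ℝ} (hρ : 0 < ρ) (hq : 0 < q) :
    2 * fPrimitive ρ q + 2 * |flowTime ρ q|
      ≤ 1 / (2 * ρ ^ 2) + (1 + ρ) / (2 * ρ ^ 2) * |log q| := by
  rcases le_total q 1 with hq1 | hq1
  · have hsum : 2 * fPrimitive ρ q + 2 * flowTime ρ q
        = (1 - q) / (2 * ρ ^ 2) + (1 + ρ) / (2 * ρ ^ 2) * -log q := by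
      unfold fPrimitive flowTime; field_simp; ring
    have : (1 - q) / (2 * ρ ^ 2) ≤ 1 / (2 * ρ ^ 2) := by gcongr; linarith
    rw [abs_of_nonneg (flowTime_nonneg hρ.ne' hq hq1), abs_of_nonpos (log_nonpos hq.le hq1)]
    linarith
  · have hdiff : 2 * fPrimitive ρ q - 2 * flowTime ρ q
        = (1 - q⁻¹) / (2 * ρ ^ 2) + (1 - ρ) / (2 * ρ ^ 2) * log q := by
      unfold fPrimitive flowTime; field_simp; ring
    have h1 : (1 - q⁻¹) / (2 * ρ ^ 2) ≤ 1 / (2 * ρ ^ 2) := by gcongr; linarith [inv_pos.2 hq]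
    have h2 : (1 - ρ) / (2 * ρ ^ 2) * log q ≤ (1 + ρ) / (2 * ρ ^ 2) * log q := by
      gcongr
      · exact log_nonneg hq1
      · linarith
    rw [abs_of_nonpos (flowTime_nonpos hρ.ne' hq1), abs_of_nonneg (log_nonneg hq1)]
    linarith

lemma abs_log_le_log_one_add_abs_flowTime {ρ q : ℝ} (hρ : ρ ≠ 0) (hq : 0 < q) :
    |log q| ≤ log (1 + 8 * ρ ^ 2 * |flowTime ρ q|) := by
  wlog hq1 : q ≤ 1 generalizing q
  · simpa only [log_inv, abs_neg, flowTime_inv] using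
      this (inv_pos.2 hq) (inv_le_one_of_one_le₀ (not_le.1 hq1).le)
  have hqinv : q⁻¹ ≤ 1 + 8 * ρ ^ 2 * flowTime ρ q := by
    have hmul : 8 * ρ ^ 2 * flowTime ρ q = q⁻¹ - q - 2 * log q := by
      unfold flowTime; field_simp; ring
    linarith [log_nonpos hq.le hq1]
  rw [abs_of_nonpos (log_nonpos hq.le hq1), abs_of_nonneg (flowTime_nonneg hρ hq hq1), ← log_inv]
  exact log_le_log (inv_pos.2 hq) hqinv

namespace IsReducedSol

variable {ρ y : ℝ} {p : ℝ → ℝ}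

lemma continuous (hp : IsReducedSol ρ y p) : Continuous p :=
  continuous_iff_continuousAt.2 fun u => (hp.2.2 u).continuousAt

lemma hasDerivAt_flowTime (hρ : ρ ≠ 0) (hp : IsReducedSol ρ y p) (u : ℝ) :
    HasDerivAt (fun u => flowTime ρ (p u)) 1 u := by
  have hq := hp.1 u
  have hflowTime : HasDerivAt (flowTime ρ)
      ((-(p u ^ 2)⁻¹ - 1) / (8 * ρ ^ 2) - (p u)⁻¹ / (4 * ρ ^ 2)) (p u) :=
    (((hasDerivAt_inv hq.ne').sub (hasDerivAt_id _)).div_const _).sub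
      ((hasDerivAt_log hq.ne').div_const _)
  refine (hflowTime.comp u (hp.2.2 u)).congr_deriv ?_
  field_simp
  ring

lemma hasDerivAt_fPrimitive (hρ : ρ ≠ 0) (hp : IsReducedSol ρ y p) (u : ℝ) :
    HasDerivAt (fun u => fPrimitive ρ (p u)) (fIntegrand ρ (p u)) u := by
  have hq := hp.1 u
  have hfPrimitive : HasDerivAt (fPrimitive ρ)
      ((-1 + (p u ^ 2)⁻¹) / (8 * ρ ^ 2) - (p u)⁻¹ / (4 * ρ)) (p u) :=
    (((((hasDerivAt_id _).const_sub 2).sub (hasDerivAt_inv hq.ne')).div_const _).sub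
      ((hasDerivAt_log hq.ne').div_const _)).congr_deriv (by ring)
  refine (hfPrimitive.comp u (hp.2.2 u)).congr_deriv ?_
  unfold fIntegrand
  field_simp
  ring

lemma flowTime_eq_add (hρ : ρ ≠ 0) (hp : IsReducedSol ρ y p) (u : ℝ) :
    flowTime ρ (p u) = flowTime ρ y + u := by
  have := intervalIntegral.integral_eq_sub_of_hasDerivAt
    (fun v _ => hp.hasDerivAt_flowTime hρ v)
    (intervalIntegrable_const (c := (1 : ℝ)) (a := 0) (b := u))
  simp only [intervalIntegral.integral_const, sub_zero, smul_eq_mul, mul_one, hp.2.1] at this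
  linarith

lemma integral_fIntegrand (hρ : ρ ≠ 0) (hp : IsReducedSol ρ y p) (r : ℝ) :
    ∫ u in (0 : ℝ)..r, fIntegrand ρ (p u) = fPrimitive ρ (p r) - fPrimitive ρ y := by
  rw [← hp.2.1]
  refine intervalIntegral.integral_eq_sub_of_hasDerivAt
    (fun u _ => hp.hasDerivAt_fPrimitive hρ u) (Continuous.intervalIntegrable ?_ _ _)
  have hpc := hp.continuous
  unfold fIntegrand
  fun_prop (disch := exact fun u => (by have := hp.1 u; positivity))

lemma apply_neg (hρ : ρ ≠ 0) (hp : IsReducedSol ρ 1 p) (u : ℝ) : p (-u) = (p u)⁻¹ := by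
  refine (strictAntiOn_flowTime hρ).injOn (hp.1 _) (inv_pos.2 (hp.1 u)) ?_
  rw [flowTime_inv, hp.flowTime_eq_add hρ, hp.flowTime_eq_add hρ, flowTime_one]
  ring

lemma integral_gIntegrand (hρ : ρ ≠ 0) (hp : IsReducedSol ρ 1 p) (r : ℝ) :
    ∫ u in (0 : ℝ)..r, gIntegrand ρ (p u) = -∫ u in (0 : ℝ)..-r, fIntegrand ρ (p u) := by
  have h : ∀ u, gIntegrand ρ (p u) = fIntegrand ρ (p (-u)) := fun u => by
    rw [gIntegrand_eq_fIntegrand_inv ρ (hp.1 u), hp.apply_neg hρ]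
  simp only [h, intervalIntegral.integral_comp_neg (fun u => fIntegrand ρ (p u)), neg_zero]
  exact intervalIntegral.integral_symm _ _

lemma two_mul_integral_fIntegrand_le (hρ : 0 < ρ) (hp : IsReducedSol ρ 1 p) (r : ℝ) :
    2 * ∫ u in (0 : ℝ)..r, fIntegrand ρ (p u)
      ≤ -2 * |r| + (1 / (2 * ρ ^ 2) + (1 + ρ) / (2 * ρ ^ 2) * log (1 + 8 * ρ ^ 2 * |r|)) := by
  have hr : flowTime ρ (p r) = r := by rw [hp.flowTime_eq_add hρ.ne', flowTime_one, zero_add]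
  have hbound := two_mul_fPrimitive_add_two_mul_abs_flowTime_le hρ (hp.1 r)
  have hlog := abs_log_le_log_one_add_abs_flowTime hρ.ne' (hp.1 r)
  rw [hr] at hbound hlog
  rw [hp.integral_fIntegrand hρ.ne', fPrimitive_one, sub_zero]
  have : 0 ≤ (1 + ρ) / (2 * ρ ^ 2) := by positivity
  nlinarith

end IsReducedSol

lemma isLittleO_const_add_mul_log_one_add_mul (a b : ℝ) {c : ℝ} (hc : 0 < c) :
    (fun t => a + b * log (1 + c * t)) =o[atTop] id := by
  have hlin : Tendsto (fun t => 1 + c * t) atTop atTop :=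
    tendsto_atTop_add_const_left _ _ (tendsto_id.const_mul_atTop hc)
  have hlog : (fun t => log (1 + c * t)) =o[atTop] fun t => 1 + c * t :=
    isLittleO_log_id_atTop.comp_tendsto hlin
  have hlinO : (fun t => 1 + c * t) =O[atTop] id :=
    (isLittleO_const_id_atTop 1).isBigO.add ((isBigO_refl _ _).const_mul_left c)
  exact (isLittleO_const_id_atTop a).add ((hlog.trans_isBigO hlinO).const_mul_left b)

lemma exists_pos_forall_le_mul_of_isLittleO {E : ℝ → ℝ} (hE : E =o[atTop] id) {c : ℝ}
    (hc : 0 < c) : ∃ t₀, 0 < t₀ ∧ ∀ t, t₀ ≤ t → E t ≤ c * t := by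
  obtain ⟨t₀, ht₀⟩ := eventually_atTop.1 (hE.def hc)
  refine ⟨max t₀ 1, by positivity, fun t ht => ?_⟩
  have ht1 : 0 ≤ t := zero_le_one.trans (le_of_max_le_right ht)
  simpa [abs_of_nonneg ht1] using (le_abs_self _).trans (ht₀ t (le_of_max_le_left ht))

lemma IsSsol.gRho_eq {ρ x : ℝ} {S : ℝ → ℝ} (hS : IsSsol ρ x S) (r : ℝ) :
    gRho ρ x S r = x * exp (-2 * ∫ u in (0 : ℝ)..r, gIntegrand ρ (S u ^ ρ)) := by
  have h : ∀ u, S u ^ (2 * ρ) = (S u ^ ρ) ^ 2 := fun u => by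
    rw [mul_comm, rpow_mul (hS.1 u).le, rpow_two]
  simp only [gRho, gIntegrand, h]

theorem stmt11 (ρ : ℝ) (hρ : 0 < ρ) (S : ℝ → ℝ) (hS : IsSsol ρ 1 S) :
    (∀ r : ℝ, fRho ρ S r = gRho ρ 1 S (-r)) ∧
    ∀ ε : ℝ, 0 < ε → ∃ r₀ : ℝ, 0 < r₀ ∧ ∀ r : ℝ, r₀ ≤ |r| →
      fRho ρ S r ≤ Real.exp (-2 * |r| * (1 - ε)) ∧
      gRho ρ 1 S r ≤ Real.exp (-2 * |r| * (1 - ε)) := by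
  have hp : IsReducedSol ρ 1 (fun u => S u ^ ρ) := by
    simpa only [one_rpow] using hS.isReducedSol_rpow
  have hfg : ∀ r, fRho ρ S r = gRho ρ 1 S (-r) := fun r => by
    rw [hS.gRho_eq, hp.integral_gIntegrand hρ.ne', neg_neg, one_mul, neg_mul_neg]
    rfl
  refine ⟨hfg, fun ε hε => ?_⟩
  obtain ⟨r₀, hr₀, hsmall⟩ := exists_pos_forall_le_mul_of_isLittleO
    (isLittleO_const_add_mul_log_one_add_mul (1 / (2 * ρ ^ 2)) ((1 + ρ) / (2 * ρ ^ 2))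
      (by positivity : 0 < 8 * ρ ^ 2)) (by positivity : 0 < 2 * ε)
  have hf : ∀ r, r₀ ≤ |r| → fRho ρ S r ≤ exp (-2 * |r| * (1 - ε)) := fun r hr => by
    show exp (2 * ∫ u in (0 : ℝ)..r, fIntegrand ρ (S u ^ ρ)) ≤ _
    exact exp_le_exp.2 (by linarith [hp.two_mul_integral_fIntegrand_le hρ r, hsmall |r| hr])
  refine ⟨r₀, hr₀, fun r hr => ⟨hf r hr, ?_⟩⟩
  simpa only [hfg, neg_neg, abs_neg] using hf (-r) (by rwa [abs_neg])

end
end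

section
/- For all ρ, x ∈ (0,∞), the functions u ↦ f_ρ(x,u) and u ↦ g_ρ(x,u) are integrable over ℝ and ∫_ℝ f_ρ(x,u) du = ∫_ℝ g_ρ(x,u) du. -/
open Real MeasureTheory Filter Set

noncomputable section

/-!
In the variable `z = log S^ρ` the ODE reads `z' = -4ρ² / (1 + cosh z)`, which integrates to
`sinh z + z = sinh z₀ + z₀ - 4ρ² u`; so `u ↦ z(u)` is a bijection of `ℝ` with explicit inverse.
With `Φ(z) = -z/(2ρ) - cosh z/(2ρ²)` one finds `f = exp (Φ(z) - Φ(z₀))` and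
`g = exp (Φ(-z) - Φ(z₀))`. Substituting `u ↦ z` turns `du` into the even weight
`(1 + cosh z)/(4ρ²) dz`, so `z ↦ -z` carries one integral to the other, and the weighted integrand
is integrable since `cosh z` grows faster than any linear function.
-/

open Function

section ChangeOfVariables

variable {E : Type*} [NormedAddCommGroup E] [NormedSpace ℝ E] {U U' Z : ℝ → ℝ}

theorem integrable_comp_iff_integrable_abs_deriv_smul (hU : ∀ s, HasDerivAt U (U' s) s)
    (hUZ : LeftInverse U Z) (hZU : LeftInverse Z U) (k : ℝ → E) :
    Integrable (fun u => k (Z u)) ↔ Integrable fun s => |U' s| • k s := by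
  have h := integrableOn_image_iff_integrableOn_abs_deriv_smul MeasurableSet.univ
    (fun s _ => (hU s).hasDerivWithinAt) hZU.injective.injOn fun u => k (Z u)
  simpa only [image_univ, hUZ.surjective.range_eq, integrableOn_univ, hZU _] using h

theorem integral_comp_eq_integral_abs_deriv_smul (hU : ∀ s, HasDerivAt U (U' s) s)
    (hUZ : LeftInverse U Z) (hZU : LeftInverse Z U) (k : ℝ → E) :
    ∫ u, k (Z u) = ∫ s, |U' s| • k s := by
  have h := integral_image_eq_integral_abs_deriv_smul MeasurableSet.univ
    (fun s _ => (hU s).hasDerivWithinAt) hZU.injective.injOn fun u => k (Z u)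
  simpa only [image_univ, hUZ.surjective.range_eq, setIntegral_univ, hZU _] using h

end ChangeOfVariables

theorem sq_div_four_le_cosh (s : ℝ) : s ^ 2 / 4 ≤ cosh s := by
  have h := pow_div_factorial_le_exp _ (abs_nonneg s) 2
  rw [← cosh_abs, cosh_eq]
  simp only [sq_abs, Nat.factorial_two, Nat.cast_ofNat] at h
  linarith [exp_pos (-|s|)]

theorem integrable_one_add_cosh_mul_exp (a : ℝ) {β : ℝ} (hβ : 0 < β) :
    Integrable fun s => (1 + cosh s) * exp (a * s - β * cosh s) := by
  set γ := β / 2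
  have hγ : 0 < γ := by positivity
  have hgauss :
      Integrable fun s => 2 / γ * exp (a ^ 2 / γ) * exp (-(γ / 4) * (s - 2 * a / γ) ^ 2) :=
    ((integrable_exp_neg_mul_sq (by positivity)).comp_sub_right _).const_mul _
  refine hgauss.mono' (by fun_prop) (Eventually.of_forall fun s => ?_)
  have hcosh : 1 ≤ cosh s := one_le_cosh s
  -- `y ≤ exp y` absorbs the factor `1 + cosh s` into half of the decay `exp (-β cosh s)`
  have habsorb : γ * cosh s ≤ exp (γ * cosh s) := by linarith [add_one_le_exp (γ * cosh s)]
  rw [Real.norm_of_nonneg (by positivity)]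
  calc (1 + cosh s) * exp (a * s - β * cosh s)
      ≤ 2 / γ * exp (γ * cosh s) * exp (a * s - β * cosh s) := by
        gcongr
        rw [div_mul_eq_mul_div, le_div_iff₀ hγ]
        nlinarith
    _ = 2 / γ * exp (a * s - γ * cosh s) := by
        rw [mul_assoc, ← exp_add]; congr 2; ring
    _ ≤ 2 / γ * exp (a * s - γ * (s ^ 2 / 4)) := by
        gcongr; exact sq_div_four_le_cosh s
    _ = 2 / γ * exp (a ^ 2 / γ) * exp (-(γ / 4) * (s - 2 * a / γ) ^ 2) := by
        rw [mul_assoc, ← exp_add]; congr 2; field_simp; ring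

def logRpow (ρ : ℝ) (S : ℝ → ℝ) (u : ℝ) : ℝ := ρ * Real.log (S u)

def potential (ρ s : ℝ) : ℝ := -(s / (2 * ρ)) - cosh s / (2 * ρ ^ 2)

def solTime (ρ z₀ s : ℝ) : ℝ := (sinh z₀ + z₀ - sinh s - s) / (4 * ρ ^ 2)

theorem hasDerivAt_potential (ρ s : ℝ) :
    HasDerivAt (potential ρ) (-(1 / (2 * ρ)) - sinh s / (2 * ρ ^ 2)) s :=
  ((hasDerivAt_id' s).div_const (2 * ρ)).neg.sub ((hasDerivAt_cosh s).div_const (2 * ρ ^ 2))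

theorem hasDerivAt_solTime (ρ z₀ s : ℝ) :
    HasDerivAt (solTime ρ z₀) (-(1 + cosh s) / (4 * ρ ^ 2)) s := by
  have h : HasDerivAt (fun s => (sinh z₀ + z₀ - sinh s - s) / (4 * ρ ^ 2)) _ s :=
    (((hasDerivAt_const s (sinh z₀ + z₀)).sub (hasDerivAt_sinh s)).sub
      (hasDerivAt_id' s)).div_const (4 * ρ ^ 2)
  exact h.congr_deriv (by ring)

theorem integrable_one_add_cosh_mul_exp_potential {ρ : ℝ} (hρ : ρ ≠ 0) (c : ℝ) :
    Integrable fun s => (1 + cosh s) * exp (potential ρ s - c) := by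
  refine ((integrable_one_add_cosh_mul_exp (-(1 / (2 * ρ))) (β := 1 / (2 * ρ ^ 2))
    (by positivity)).mul_const (exp (-c))).congr (Eventually.of_forall fun s => ?_)
  simp only [potential, mul_assoc, ← exp_add]
  congr 2
  ring

namespace IsSsol

variable {ρ x : ℝ} {S : ℝ → ℝ}

theorem rpow_eq_exp_logRpow (hS : IsSsol ρ x S) (u : ℝ) : S u ^ ρ = exp (logRpow ρ S u) := by
  rw [rpow_def_of_pos (hS.1 u), logRpow, mul_comm]

theorem hasDerivAt_logRpow (hS : IsSsol ρ x S) (u : ℝ) :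
    HasDerivAt (logRpow ρ S) (-(4 * ρ ^ 2) / (1 + cosh (logRpow ρ S u))) u := by
  have hSu := hS.1 u
  refine (((hS.2.2 u).log hSu.ne').const_mul ρ).congr_deriv ?_
  rw [rpow_add hSu, rpow_one, hS.rpow_eq_exp_logRpow, cosh_eq, exp_neg]
  have := exp_pos (logRpow ρ S u)
  field_simp
  ring

theorem continuous_logRpow (hS : IsSsol ρ x S) : Continuous (logRpow ρ S) :=
  continuous_iff_continuousAt.2 fun u => (hS.hasDerivAt_logRpow u).continuousAt

theorem sinh_logRpow_add_logRpow (hS : IsSsol ρ x S) (u : ℝ) :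
    sinh (logRpow ρ S u) + logRpow ρ S u
      = sinh (logRpow ρ S 0) + logRpow ρ S 0 - 4 * ρ ^ 2 * u := by
  have hderiv : ∀ v,
      HasDerivAt (fun v => sinh (logRpow ρ S v) + logRpow ρ S v + 4 * ρ ^ 2 * v) 0 v := by
    intro v
    have hz := hS.hasDerivAt_logRpow v
    have : 1 + cosh (logRpow ρ S v) ≠ 0 := by positivity
    refine ((hz.sinh.add hz).add ((hasDerivAt_id' v).const_mul (4 * ρ ^ 2))).congr_deriv ?_
    field_simp
    ring
  have := is_const_of_deriv_eq_zero (fun v => (hderiv v).differentiableAt)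
    (fun v => (hderiv v).deriv) u 0
  simp only [mul_zero, add_zero] at this
  linarith

theorem solTime_logRpow (hρ : ρ ≠ 0) (hS : IsSsol ρ x S) :
    LeftInverse (solTime ρ (logRpow ρ S 0)) (logRpow ρ S) := fun u => by
  rw [solTime, sub_sub, hS.sinh_logRpow_add_logRpow u]
  field_simp
  ring

theorem logRpow_solTime (hρ : ρ ≠ 0) (hS : IsSsol ρ x S) :
    LeftInverse (logRpow ρ S) (solTime ρ (logRpow ρ S 0)) := fun s => by
  apply (sinh_strictMono.add strictMono_id).injective
  change sinh (logRpow ρ S _) + logRpow ρ S _ = sinh s + s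
  rw [hS.sinh_logRpow_add_logRpow, solTime]
  field_simp
  ring

theorem fRho_integrand_eq (hS : IsSsol ρ x S) (u : ℝ) :
    1 - 2 * (1 + (1 - ρ) * S u ^ ρ) / (1 + S u ^ ρ) ^ 2
      = (ρ + sinh (logRpow ρ S u)) / (1 + cosh (logRpow ρ S u)) := by
  rw [hS.rpow_eq_exp_logRpow, sinh_eq, cosh_eq, exp_neg]
  have := exp_pos (logRpow ρ S u)
  field_simp
  ring

theorem gRho_integrand_eq (hS : IsSsol ρ x S) (u : ℝ) :
    1 - 2 * ((1 - ρ) * S u ^ ρ + S u ^ (2 * ρ)) / (1 + S u ^ ρ) ^ 2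
      = (ρ - sinh (logRpow ρ S u)) / (1 + cosh (logRpow ρ S u)) := by
  rw [show 2 * ρ = ρ + ρ by ring, rpow_add (hS.1 u), hS.rpow_eq_exp_logRpow, sinh_eq, cosh_eq,
    exp_neg]
  have := exp_pos (logRpow ρ S u)
  field_simp
  ring

theorem fRho_eq (hρ : ρ ≠ 0) (hS : IsSsol ρ x S) (r : ℝ) :
    fRho ρ S r = exp (potential ρ (logRpow ρ S r) - potential ρ (logRpow ρ S 0)) := by
  have hderiv : ∀ u, HasDerivAt (fun u => potential ρ (logRpow ρ S u))
      (2 * ((ρ + sinh (logRpow ρ S u)) / (1 + cosh (logRpow ρ S u)))) u := by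
    intro u
    refine ((hasDerivAt_potential ρ _).comp u (hS.hasDerivAt_logRpow u)).congr_deriv ?_
    have : 1 + cosh (logRpow ρ S u) ≠ 0 := by positivity
    field_simp
    ring
  have hcont :
      Continuous fun u => 2 * ((ρ + sinh (logRpow ρ S u)) / (1 + cosh (logRpow ρ S u))) :=
    have := hS.continuous_logRpow
    continuous_const.mul ((by fun_prop : Continuous _).div (by fun_prop) fun u => by positivity)
  simp_rw [fRho, hS.fRho_integrand_eq, ← intervalIntegral.integral_const_mul]
  rw [intervalIntegral.integral_eq_sub_of_hasDerivAt (fun u _ => hderiv u)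
    (hcont.intervalIntegrable _ _)]

theorem gRho_eq_s12 (hρ : ρ ≠ 0) (hS : IsSsol ρ x S) (r : ℝ) :
    gRho ρ x S r = exp (potential ρ (-logRpow ρ S r) - potential ρ (logRpow ρ S 0)) := by
  have hderiv : ∀ u, HasDerivAt (fun u => potential ρ (-logRpow ρ S u))
      (-2 * ((ρ - sinh (logRpow ρ S u)) / (1 + cosh (logRpow ρ S u)))) u := by
    intro u
    refine ((hasDerivAt_potential ρ _).comp u (hS.hasDerivAt_logRpow u).neg).congr_deriv ?_
    have : 1 + cosh (logRpow ρ S u) ≠ 0 := by positivity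
    rw [Pi.neg_apply, sinh_neg]
    field_simp
    ring
  have hcont :
      Continuous fun u => -2 * ((ρ - sinh (logRpow ρ S u)) / (1 + cosh (logRpow ρ S u))) :=
    have := hS.continuous_logRpow
    continuous_const.mul ((by fun_prop : Continuous _).div (by fun_prop) fun u => by positivity)
  have hx_eq : x = exp (logRpow ρ S 0 / ρ) := by
    rw [logRpow, hS.2.1, mul_div_cancel_left₀ _ hρ, exp_log (hS.2.1 ▸ hS.1 0)]
  simp_rw [gRho, hS.gRho_integrand_eq, ← intervalIntegral.integral_const_mul]
  rw [intervalIntegral.integral_eq_sub_of_hasDerivAt (fun u _ => hderiv u)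
    (hcont.intervalIntegrable _ _), hx_eq, ← exp_add]
  congr 1
  simp only [potential, cosh_neg]
  field_simp
  ring

end IsSsol

theorem stmt12_general (ρ x : ℝ) (hρ : 0 < ρ) (S : ℝ → ℝ) (hS : IsSsol ρ x S) :
    Integrable (fun u => fRho ρ S u) ∧
    Integrable (fun u => gRho ρ x S u) ∧
    ∫ u, fRho ρ S u = ∫ u, gRho ρ x S u := by
  set z₀ := logRpow ρ S 0
  set k : ℝ → ℝ := fun s => exp (potential ρ s - potential ρ z₀)
  have hU := hasDerivAt_solTime ρ z₀
  have hUZ := hS.solTime_logRpow hρ.ne'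
  have hZU := hS.logRpow_solTime hρ.ne'
  have hweight : ∀ s, |-(1 + cosh s) / (4 * ρ ^ 2)| = (1 + cosh s) / (4 * ρ ^ 2) := fun s => by
    rw [neg_div, abs_neg, abs_of_pos (by positivity)]
  have hk : Integrable fun s => |-(1 + cosh s) / (4 * ρ ^ 2)| • k s := by
    simp_rw [hweight, smul_eq_mul, div_mul_eq_mul_div, div_eq_inv_mul]
    exact (integrable_one_add_cosh_mul_exp_potential hρ.ne' _).const_mul _
  have hk_even : (fun s => |-(1 + cosh s) / (4 * ρ ^ 2)| • k (-s))
      = fun s => |-(1 + cosh (-s)) / (4 * ρ ^ 2)| • k (-s) := by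
    simp_rw [cosh_neg]
  simp_rw [hS.fRho_eq hρ.ne', hS.gRho_eq_s12 hρ.ne']
  rw [integrable_comp_iff_integrable_abs_deriv_smul hU hUZ hZU k,
    integrable_comp_iff_integrable_abs_deriv_smul hU hUZ hZU (fun s => k (-s)),
    integral_comp_eq_integral_abs_deriv_smul hU hUZ hZU k,
    integral_comp_eq_integral_abs_deriv_smul hU hUZ hZU (fun s => k (-s)), hk_even,
    integral_neg_eq_self (fun s => |-(1 + cosh s) / (4 * ρ ^ 2)| • k s)]
  exact ⟨hk, hk.comp_neg, rfl⟩

theorem stmt12 (ρ x : ℝ) (hρ : 0 < ρ) (hx : 0 < x) (S : ℝ → ℝ) (hS : IsSsol ρ x S) :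
    Integrable (fun u => fRho ρ S u) ∧
    Integrable (fun u => gRho ρ x S u) ∧
    ∫ u, fRho ρ S u = ∫ u, gRho ρ x S u :=
  stmt12_general ρ x hρ S hS
end
end
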